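/- If 0 < r ≤ (2 - √3)/(2√3), then the annulus A_r admits a proper 3-coloring: there exists c : A_r → Fin 3 such that any two points of A_r at Euclidean distance 1 receive distinct colors. -/

import Mathlib

/-!
Colour a nonzero point by which of the three half-open sectors `(-π, -π/3]`, `(-π/3, π/3]`,
`(π/3, π]` contains its argument. Two points of one sector span an angle `θ < 2π/3`, so
`cos θ > -1/2`, and the law of cosines gives `‖p - q‖² < ‖p‖² + ‖q‖² + ‖p‖‖q‖ ≤ 3 R²`
when both norms are at most `R`. For `R = 1/2 + r ≤ 1/√3` this is at most `1`, so no two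
points at distance `1` share a colour.
-/

def annulus (r : ℝ) : Set ℂ := {p : ℂ | 1 / 2 - r ≤ ‖p‖ ∧ ‖p‖ ≤ 1 / 2 + r}

open Real ComplexConjugate

noncomputable def sectorColor (z : ℂ) : Fin 3 :=
  if z.arg ≤ -(π / 3) then 0 else if z.arg ≤ π / 3 then 1 else 2

lemma abs_arg_sub_arg_lt_of_sectorColor_eq {p q : ℂ} (h : sectorColor p = sectorColor q) :
    |p.arg - q.arg| < 2 * π / 3 := by
  have := p.neg_pi_lt_arg
  have := p.arg_le_pi
  have := q.neg_pi_lt_arg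
  have := q.arg_le_pi
  unfold sectorColor at h
  rw [abs_lt]
  split_ifs at h <;> first | (constructor <;> linarith) | simp at h

lemma norm_sub_sq_eq_cos_arg_sub (p q : ℂ) :
    ‖p - q‖ ^ 2 = ‖p‖ ^ 2 + ‖q‖ ^ 2 - 2 * ‖p‖ * ‖q‖ * cos (p.arg - q.arg) := by
  have hre : (p * conj q).re = ‖p‖ * ‖q‖ * cos (p.arg - q.arg) := by
    rw [Complex.mul_re, Complex.conj_re, Complex.conj_im, cos_sub,
      ← Complex.norm_mul_cos_arg p, ← Complex.norm_mul_sin_arg p,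
      ← Complex.norm_mul_cos_arg q, ← Complex.norm_mul_sin_arg q]
    ring
  rw [Complex.sq_norm, Complex.normSq_sub, hre, Complex.normSq_eq_norm_sq,
    Complex.normSq_eq_norm_sq]
  ring

lemma neg_half_lt_cos_of_abs_lt {θ : ℝ} (h : |θ| < 2 * π / 3) : -(1 / 2) < cos θ := by
  have cos_two_pi_div_three : cos (2 * π / 3) = -(1 / 2) := by
    rw [show 2 * π / 3 = π - π / 3 by ring, cos_pi_sub, cos_pi_div_three]
  rw [← cos_abs, ← cos_two_pi_div_three]
  exact cos_lt_cos_of_nonneg_of_le_pi (abs_nonneg θ) (by linarith [pi_pos]) h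

lemma norm_sub_sq_lt_of_sectorColor_eq {p q : ℂ} (hp : p ≠ 0) (hq : q ≠ 0)
    (h : sectorColor p = sectorColor q) :
    ‖p - q‖ ^ 2 < ‖p‖ ^ 2 + ‖q‖ ^ 2 + ‖p‖ * ‖q‖ := by
  have hcos := neg_half_lt_cos_of_abs_lt (abs_arg_sub_arg_lt_of_sectorColor_eq h)
  have hpq : 0 < ‖p‖ * ‖q‖ := mul_pos (norm_pos_iff.mpr hp) (norm_pos_iff.mpr hq)
  rw [norm_sub_sq_eq_cos_arg_sub]
  nlinarith

lemma sectorColor_ne_of_norm_sub_eq_one {p q : ℂ} (hp : p ≠ 0) (hq : q ≠ 0)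
    (hpR : ‖p‖ ≤ 1 / √3) (hqR : ‖q‖ ≤ 1 / √3) (hpq : ‖p - q‖ = 1) :
    sectorColor p ≠ sectorColor q := by
  intro h
  have hlt := norm_sub_sq_lt_of_sectorColor_eq hp hq h
  have hR : (1 / √3) ^ 2 = 1 / 3 := by
    rw [div_pow, sq_sqrt (by norm_num : (0 : ℝ) ≤ 3), one_pow]
  have hpR2 := pow_le_pow_left₀ (norm_nonneg p) hpR 2
  have hqR2 := pow_le_pow_left₀ (norm_nonneg q) hqR 2
  rw [hpq] at hlt
  nlinarith [sq_nonneg (‖p‖ - ‖q‖)]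

lemma one_div_sqrt_three_sub_half : 1 / √3 - 1 / 2 = (2 - √3) / (2 * √3) := by
  have : √3 ≠ 0 := by positivity
  field_simp

lemma one_div_sqrt_three_lt_one : 1 / √3 < 1 := by
  rw [div_lt_one (by positivity), lt_sqrt zero_le_one]
  norm_num

theorem annulus_three_colorable (r : ℝ)
    (hr1 : r ≤ (2 - Real.sqrt 3) / (2 * Real.sqrt 3)) :
    ∃ c : annulus r → Fin 3,
      ∀ p q : annulus r, ‖(p : ℂ) - (q : ℂ)‖ = 1 → c p ≠ c q := by
  have hR : 1 / 2 + r ≤ 1 / √3 := by linarith [one_div_sqrt_three_sub_half]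
  have hr : r < 1 / 2 := by linarith [one_div_sqrt_three_lt_one]
  have ne_zero (p : annulus r) : (p : ℂ) ≠ 0 := norm_pos_iff.mp (by linarith [p.2.1])
  refine ⟨fun p ↦ sectorColor p, fun p q hpq ↦ ?_⟩
  exact sectorColor_ne_of_norm_sub_eq_one (ne_zero p) (ne_zero q)
    (p.2.2.trans hR) (q.2.2.trans hR) hpq
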